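/- For any five points x₀,…,x₄ on S¹ and any five points y₀,…,y₄ on S¹ with x₀,…,x₄ positively cyclically ordered according to their numbering, the value Θ((x₀,y₀),…,(x₄,y₄)) lies in the set { k/30 : k ∈ ℤ, |k| ≤ 20 }; in particular |Θ| ≤ 2/3 on such tuples. -/
import Mathlib


open scoped BigOperators

/-- Orientation cocycle on the circle: +1 for positively oriented (counterclockwise)
triples of distinct points, -1 for negatively oriented triples, 0 if two coincide. -/
noncomputable def orient (a b c : Circle) : ℝ :=
  Real.sign (((starRingEnd ℂ) ((b : ℂ) - (a : ℂ)) * ((c : ℂ) - (a : ℂ))).im)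

/-- `x 0, …, x (n-1)` are positively cyclically ordered according to their numbering. -/
def PosCyclicallyOrdered {n : ℕ} (x : Fin n → Circle) : Prop :=
  ∀ i j k : Fin n, i < j → j < k → orient (x i) (x j) (x k) = 1

/-- Θ = Alt(Or₁ ∪ Or₂). -/
noncomputable def Theta (z : Fin 5 → Circle × Circle) : ℝ :=
  (1 / 120) * ∑ σ : Equiv.Perm (Fin 5),
    ((Equiv.Perm.sign σ : ℤ) : ℝ) *
      (orient (z (σ 0)).1 (z (σ 1)).1 (z (σ 2)).1 *
        orient (z (σ 2)).2 (z (σ 3)).2 (z (σ 4)).2)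

/-! ### Auxiliary lemmas -/

lemma thetaAux_orient_swap1 (a b c : Circle) : orient b a c = -orient a b c := by
  unfold orient
  rw [← Real.sign_neg]
  congr 1
  simp only [Complex.mul_im, Complex.conj_re, Complex.conj_im, Complex.sub_re, Complex.sub_im]
  ring

lemma thetaAux_orient_swap2 (a b c : Circle) : orient a c b = -orient a b c := by
  unfold orient
  rw [← Real.sign_neg]
  congr 1
  simp only [Complex.mul_im, Complex.conj_re, Complex.conj_im, Complex.sub_re, Complex.sub_im]
  ring

lemma thetaAux_orient_zero1 (a c : Circle) : orient a a c = 0 := by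
  simp [orient]

lemma thetaAux_orient_zero2 (a c : Circle) : orient a c c = 0 := by
  unfold orient
  have h : (((starRingEnd ℂ) ((c:ℂ) - a)) * ((c:ℂ) - a)).im = 0 := by
    simp only [Complex.mul_im, Complex.conj_re, Complex.conj_im, Complex.sub_re, Complex.sub_im]
    ring
  rw [h, Real.sign_zero]

lemma thetaAux_orient_zero3 (a c : Circle) : orient a c a = 0 := by
  rw [thetaAux_orient_swap2, thetaAux_orient_zero1, neg_zero]

lemma thetaAux_orient_trichotomy (a b c : Circle) :
    orient a b c = -1 ∨ orient a b c = 0 ∨ orient a b c = 1 :=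
  Real.sign_apply_eq _

/-- Levi-Civita sign of a triple of indices. -/
def thetaAux_eps (i j k : Fin 5) : ℤ :=
  if i = j ∨ j = k ∨ i = k then 0
  else if (i < j ∧ j < k) ∨ (j < k ∧ k < i) ∨ (k < i ∧ i < j) then 1 else -1

/-- Elementary alternating tensor supported on the triple `{i,j,k}`. -/
def thetaAux_dl (a b c i j k : Fin 5) : ℤ :=
  if ({a, b, c} : Finset (Fin 5)) = {i, j, k} then thetaAux_eps a b c else 0

section YSide

variable (y : Fin 5 → Circle)

lemma thetaAux_hw1 (a b c : Fin 5) (_ : b < a) :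
    orient (y a) (y b) (y c) = -orient (y b) (y a) (y c) :=
  thetaAux_orient_swap1 _ _ _

lemma thetaAux_hw2 (a b c : Fin 5) (_ : c < b) :
    orient (y a) (y b) (y c) = -orient (y a) (y c) (y b) :=
  thetaAux_orient_swap2 _ _ _

set_option maxHeartbeats 2000000 in
lemma thetaAux_claim (a b c : Fin 5) (hab : a ≠ b) (hac : a ≠ c) (hbc : b ≠ c) :
    orient (y a) (y b) (y c) =
      ((thetaAux_dl a b c 0 1 2 : ℤ) : ℝ) * orient (y 0) (y 1) (y 2) +
      ((thetaAux_dl a b c 0 1 3 : ℤ) : ℝ) * orient (y 0) (y 1) (y 3) +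
      ((thetaAux_dl a b c 0 1 4 : ℤ) : ℝ) * orient (y 0) (y 1) (y 4) +
      ((thetaAux_dl a b c 0 2 3 : ℤ) : ℝ) * orient (y 0) (y 2) (y 3) +
      ((thetaAux_dl a b c 0 2 4 : ℤ) : ℝ) * orient (y 0) (y 2) (y 4) +
      ((thetaAux_dl a b c 0 3 4 : ℤ) : ℝ) * orient (y 0) (y 3) (y 4) +
      ((thetaAux_dl a b c 1 2 3 : ℤ) : ℝ) * orient (y 1) (y 2) (y 3) +
      ((thetaAux_dl a b c 1 2 4 : ℤ) : ℝ) * orient (y 1) (y 2) (y 4) +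
      ((thetaAux_dl a b c 1 3 4 : ℤ) : ℝ) * orient (y 1) (y 3) (y 4) +
      ((thetaAux_dl a b c 2 3 4 : ℤ) : ℝ) * orient (y 2) (y 3) (y 4) := by
  fin_cases a <;> fin_cases b <;> fin_cases c <;>
    simp_all (config := { decide := true }) [thetaAux_dl, thetaAux_eps, thetaAux_hw1, thetaAux_hw2]

end YSide

set_option maxHeartbeats 4000000 in
set_option maxRecDepth 100000 in
lemma thetaAux_coef012 : (∑ σ : Equiv.Perm (Fin 5), (Equiv.Perm.sign σ : ℤ) *
    thetaAux_eps (σ 0) (σ 1) (σ 2) * thetaAux_dl (σ 2) (σ 3) (σ 4) 0 1 2) = 12 := by decide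

set_option maxRecDepth 100000 in
lemma thetaAux_coef013 : (∑ σ : Equiv.Perm (Fin 5), (Equiv.Perm.sign σ : ℤ) *
    thetaAux_eps (σ 0) (σ 1) (σ 2) * thetaAux_dl (σ 2) (σ 3) (σ 4) 0 1 3) = -4 := by decide

set_option maxRecDepth 100000 in
lemma thetaAux_coef014 : (∑ σ : Equiv.Perm (Fin 5), (Equiv.Perm.sign σ : ℤ) *
    thetaAux_eps (σ 0) (σ 1) (σ 2) * thetaAux_dl (σ 2) (σ 3) (σ 4) 0 1 4) = 12 := by decide

set_option maxRecDepth 100000 in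
lemma thetaAux_coef023 : (∑ σ : Equiv.Perm (Fin 5), (Equiv.Perm.sign σ : ℤ) *
    thetaAux_eps (σ 0) (σ 1) (σ 2) * thetaAux_dl (σ 2) (σ 3) (σ 4) 0 2 3) = -4 := by decide

set_option maxRecDepth 100000 in
lemma thetaAux_coef024 : (∑ σ : Equiv.Perm (Fin 5), (Equiv.Perm.sign σ : ℤ) *
    thetaAux_eps (σ 0) (σ 1) (σ 2) * thetaAux_dl (σ 2) (σ 3) (σ 4) 0 2 4) = -4 := by decide

set_option maxRecDepth 100000 in
lemma thetaAux_coef034 : (∑ σ : Equiv.Perm (Fin 5), (Equiv.Perm.sign σ : ℤ) *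
    thetaAux_eps (σ 0) (σ 1) (σ 2) * thetaAux_dl (σ 2) (σ 3) (σ 4) 0 3 4) = 12 := by decide

set_option maxRecDepth 100000 in
lemma thetaAux_coef123 : (∑ σ : Equiv.Perm (Fin 5), (Equiv.Perm.sign σ : ℤ) *
    thetaAux_eps (σ 0) (σ 1) (σ 2) * thetaAux_dl (σ 2) (σ 3) (σ 4) 1 2 3) = 12 := by decide

set_option maxRecDepth 100000 in
lemma thetaAux_coef124 : (∑ σ : Equiv.Perm (Fin 5), (Equiv.Perm.sign σ : ℤ) *
    thetaAux_eps (σ 0) (σ 1) (σ 2) * thetaAux_dl (σ 2) (σ 3) (σ 4) 1 2 4) = -4 := by decide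

set_option maxRecDepth 100000 in
lemma thetaAux_coef134 : (∑ σ : Equiv.Perm (Fin 5), (Equiv.Perm.sign σ : ℤ) *
    thetaAux_eps (σ 0) (σ 1) (σ 2) * thetaAux_dl (σ 2) (σ 3) (σ 4) 1 3 4) = -4 := by decide

set_option maxRecDepth 100000 in
lemma thetaAux_coef234 : (∑ σ : Equiv.Perm (Fin 5), (Equiv.Perm.sign σ : ℤ) *
    thetaAux_eps (σ 0) (σ 1) (σ 2) * thetaAux_dl (σ 2) (σ 3) (σ 4) 2 3 4) = 12 := by decide

/-- The key integer identity: the alternating pairing against an arbitrary assignment of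
values on the ten sorted triples. -/
lemma thetaAux_keyZ (t : Fin 5 → Fin 5 → Fin 5 → ℤ) :
    (∑ σ : Equiv.Perm (Fin 5), (Equiv.Perm.sign σ : ℤ) * thetaAux_eps (σ 0) (σ 1) (σ 2) *
      (thetaAux_dl (σ 2) (σ 3) (σ 4) 0 1 2 * t 0 1 2 +
       thetaAux_dl (σ 2) (σ 3) (σ 4) 0 1 3 * t 0 1 3 +
       thetaAux_dl (σ 2) (σ 3) (σ 4) 0 1 4 * t 0 1 4 +
       thetaAux_dl (σ 2) (σ 3) (σ 4) 0 2 3 * t 0 2 3 +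
       thetaAux_dl (σ 2) (σ 3) (σ 4) 0 2 4 * t 0 2 4 +
       thetaAux_dl (σ 2) (σ 3) (σ 4) 0 3 4 * t 0 3 4 +
       thetaAux_dl (σ 2) (σ 3) (σ 4) 1 2 3 * t 1 2 3 +
       thetaAux_dl (σ 2) (σ 3) (σ 4) 1 2 4 * t 1 2 4 +
       thetaAux_dl (σ 2) (σ 3) (σ 4) 1 3 4 * t 1 3 4 +
       thetaAux_dl (σ 2) (σ 3) (σ 4) 2 3 4 * t 2 3 4)) =
    12 * (t 0 1 2 + t 0 1 4 + t 0 3 4 + t 1 2 3 + t 2 3 4)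
      - 4 * (t 0 1 3 + t 0 2 3 + t 0 2 4 + t 1 2 4 + t 1 3 4) := by
  have step : ∀ σ : Equiv.Perm (Fin 5),
      (Equiv.Perm.sign σ : ℤ) * thetaAux_eps (σ 0) (σ 1) (σ 2) *
      (thetaAux_dl (σ 2) (σ 3) (σ 4) 0 1 2 * t 0 1 2 +
       thetaAux_dl (σ 2) (σ 3) (σ 4) 0 1 3 * t 0 1 3 +
       thetaAux_dl (σ 2) (σ 3) (σ 4) 0 1 4 * t 0 1 4 +
       thetaAux_dl (σ 2) (σ 3) (σ 4) 0 2 3 * t 0 2 3 +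
       thetaAux_dl (σ 2) (σ 3) (σ 4) 0 2 4 * t 0 2 4 +
       thetaAux_dl (σ 2) (σ 3) (σ 4) 0 3 4 * t 0 3 4 +
       thetaAux_dl (σ 2) (σ 3) (σ 4) 1 2 3 * t 1 2 3 +
       thetaAux_dl (σ 2) (σ 3) (σ 4) 1 2 4 * t 1 2 4 +
       thetaAux_dl (σ 2) (σ 3) (σ 4) 1 3 4 * t 1 3 4 +
       thetaAux_dl (σ 2) (σ 3) (σ 4) 2 3 4 * t 2 3 4) =
      ((Equiv.Perm.sign σ : ℤ) * thetaAux_eps (σ 0) (σ 1) (σ 2) *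
        thetaAux_dl (σ 2) (σ 3) (σ 4) 0 1 2) * t 0 1 2 +
      ((Equiv.Perm.sign σ : ℤ) * thetaAux_eps (σ 0) (σ 1) (σ 2) *
        thetaAux_dl (σ 2) (σ 3) (σ 4) 0 1 3) * t 0 1 3 +
      ((Equiv.Perm.sign σ : ℤ) * thetaAux_eps (σ 0) (σ 1) (σ 2) *
        thetaAux_dl (σ 2) (σ 3) (σ 4) 0 1 4) * t 0 1 4 +
      ((Equiv.Perm.sign σ : ℤ) * thetaAux_eps (σ 0) (σ 1) (σ 2) *
        thetaAux_dl (σ 2) (σ 3) (σ 4) 0 2 3) * t 0 2 3 +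
      ((Equiv.Perm.sign σ : ℤ) * thetaAux_eps (σ 0) (σ 1) (σ 2) *
        thetaAux_dl (σ 2) (σ 3) (σ 4) 0 2 4) * t 0 2 4 +
      ((Equiv.Perm.sign σ : ℤ) * thetaAux_eps (σ 0) (σ 1) (σ 2) *
        thetaAux_dl (σ 2) (σ 3) (σ 4) 0 3 4) * t 0 3 4 +
      ((Equiv.Perm.sign σ : ℤ) * thetaAux_eps (σ 0) (σ 1) (σ 2) *
        thetaAux_dl (σ 2) (σ 3) (σ 4) 1 2 3) * t 1 2 3 +
      ((Equiv.Perm.sign σ : ℤ) * thetaAux_eps (σ 0) (σ 1) (σ 2) *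
        thetaAux_dl (σ 2) (σ 3) (σ 4) 1 2 4) * t 1 2 4 +
      ((Equiv.Perm.sign σ : ℤ) * thetaAux_eps (σ 0) (σ 1) (σ 2) *
        thetaAux_dl (σ 2) (σ 3) (σ 4) 1 3 4) * t 1 3 4 +
      ((Equiv.Perm.sign σ : ℤ) * thetaAux_eps (σ 0) (σ 1) (σ 2) *
        thetaAux_dl (σ 2) (σ 3) (σ 4) 2 3 4) * t 2 3 4 := fun σ => by ring
  rw [Finset.sum_congr rfl fun σ _ => step σ]
  simp only [Finset.sum_add_distrib]
  rw [← Finset.sum_mul, ← Finset.sum_mul, ← Finset.sum_mul, ← Finset.sum_mul, ← Finset.sum_mul,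
    ← Finset.sum_mul, ← Finset.sum_mul, ← Finset.sum_mul, ← Finset.sum_mul, ← Finset.sum_mul]
  rw [thetaAux_coef012, thetaAux_coef013, thetaAux_coef014, thetaAux_coef023, thetaAux_coef024,
    thetaAux_coef034, thetaAux_coef123, thetaAux_coef124, thetaAux_coef134, thetaAux_coef234]
  ring

set_option maxHeartbeats 4000000

/-- On 5-tuples whose first coordinates are positively cyclically ordered, `Θ` takes values
in `{k/30 : k ∈ ℤ, |k| ≤ 20}`; in particular `|Θ| ≤ 2/3` there. -/
theorem theta_values_of_posOrdered (x y : Fin 5 → Circle)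
    (hx : PosCyclicallyOrdered x) :
    (∃ k : ℤ, |k| ≤ 20 ∧ Theta (fun i => (x i, y i)) = (k : ℝ) / 30) ∧
      |Theta (fun i => (x i, y i))| ≤ 2 / 3 := by
  classical
  have hx1 : ∀ i j k : Fin 5, i < j → j < k → orient (x i) (x j) (x k) = 1 := hx
  have hwx1 : ∀ i j k : Fin 5, j < i → orient (x i) (x j) (x k) = -orient (x j) (x i) (x k) :=
    fun i j k _ => thetaAux_orient_swap1 _ _ _
  have hwx2 : ∀ i j k : Fin 5, k < j → orient (x i) (x j) (x k) = -orient (x i) (x k) (x j) :=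
    fun i j k _ => thetaAux_orient_swap2 _ _ _
  have hxo : ∀ i j k : Fin 5, orient (x i) (x j) (x k) = ((thetaAux_eps i j k : ℤ) : ℝ) := by
    intro i j k
    fin_cases i <;> fin_cases j <;> fin_cases k <;>
      simp (config := { decide := true }) [thetaAux_eps, hwx1, hwx2, hx1,
        thetaAux_orient_zero1, thetaAux_orient_zero2, thetaAux_orient_zero3]
  -- integer values of the `y`-orientations
  set s : Fin 5 → Fin 5 → Fin 5 → ℤ := fun i j k =>
    if orient (y i) (y j) (y k) = 1 then 1
    else if orient (y i) (y j) (y k) = -1 then -1 else 0 with hs_def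
  have hs : ∀ i j k : Fin 5, ((s i j k : ℤ) : ℝ) = orient (y i) (y j) (y k) := by
    intro i j k
    have hrfl : s i j k = if orient (y i) (y j) (y k) = 1 then 1
      else if orient (y i) (y j) (y k) = -1 then -1 else 0 := rfl
    rw [hrfl]
    split_ifs with h1 h2
    · rw [h1]; norm_num
    · rw [h2]; norm_num
    · rcases thetaAux_orient_trichotomy (y i) (y j) (y k) with h | h | h
      · exact absurd h h2
      · rw [h]; norm_num
      · exact absurd h h1
  have hsb : ∀ i j k : Fin 5, -1 ≤ s i j k ∧ s i j k ≤ 1 := by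
    intro i j k
    have hrfl : s i j k = if orient (y i) (y j) (y k) = 1 then 1
      else if orient (y i) (y j) (y k) = -1 then -1 else 0 := rfl
    rw [hrfl]
    split_ifs <;> omega
  -- rewrite each summand of Θ as the cast of an integer
  have hterm : ∀ σ : Equiv.Perm (Fin 5),
      ((Equiv.Perm.sign σ : ℤ) : ℝ) *
        (orient (x (σ 0)) (x (σ 1)) (x (σ 2)) * orient (y (σ 2)) (y (σ 3)) (y (σ 4))) =
      (((Equiv.Perm.sign σ : ℤ) * thetaAux_eps (σ 0) (σ 1) (σ 2) *
        (thetaAux_dl (σ 2) (σ 3) (σ 4) 0 1 2 * s 0 1 2 +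
         thetaAux_dl (σ 2) (σ 3) (σ 4) 0 1 3 * s 0 1 3 +
         thetaAux_dl (σ 2) (σ 3) (σ 4) 0 1 4 * s 0 1 4 +
         thetaAux_dl (σ 2) (σ 3) (σ 4) 0 2 3 * s 0 2 3 +
         thetaAux_dl (σ 2) (σ 3) (σ 4) 0 2 4 * s 0 2 4 +
         thetaAux_dl (σ 2) (σ 3) (σ 4) 0 3 4 * s 0 3 4 +
         thetaAux_dl (σ 2) (σ 3) (σ 4) 1 2 3 * s 1 2 3 +
         thetaAux_dl (σ 2) (σ 3) (σ 4) 1 2 4 * s 1 2 4 +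
         thetaAux_dl (σ 2) (σ 3) (σ 4) 1 3 4 * s 1 3 4 +
         thetaAux_dl (σ 2) (σ 3) (σ 4) 2 3 4 * s 2 3 4) : ℤ) : ℝ) := by
    intro σ
    have h23 : (σ 2) ≠ (σ 3) := σ.injective.ne (by decide)
    have h24 : (σ 2) ≠ (σ 4) := σ.injective.ne (by decide)
    have h34 : (σ 3) ≠ (σ 4) := σ.injective.ne (by decide)
    rw [hxo, thetaAux_claim y (σ 2) (σ 3) (σ 4) h23 h24 h34]
    push_cast
    simp only [hs]
    ring
  have hTheta : Theta (fun i => (x i, y i)) =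
      ((12 * (s 0 1 2 + s 0 1 4 + s 0 3 4 + s 1 2 3 + s 2 3 4)
        - 4 * (s 0 1 3 + s 0 2 3 + s 0 2 4 + s 1 2 4 + s 1 3 4) : ℤ) : ℝ) / 120 := by
    unfold Theta
    rw [Finset.sum_congr rfl fun σ _ => hterm σ, ← Int.cast_sum, thetaAux_keyZ s]
    ring
  set k0 : ℤ := 3 * (s 0 1 2 + s 0 1 4 + s 0 3 4 + s 1 2 3 + s 2 3 4)
    - (s 0 1 3 + s 0 2 3 + s 0 2 4 + s 1 2 4 + s 1 3 4) with hk0_def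
  have hTheta' : Theta (fun i => (x i, y i)) = (k0 : ℝ) / 30 := by
    rw [hTheta, hk0_def]
    push_cast
    ring
  have hk0 : |k0| ≤ 20 := by
    have b1 := hsb 0 1 2
    have b2 := hsb 0 1 4
    have b3 := hsb 0 3 4
    have b4 := hsb 1 2 3
    have b5 := hsb 2 3 4
    have b6 := hsb 0 1 3
    have b7 := hsb 0 2 3
    have b8 := hsb 0 2 4
    have b9 := hsb 1 2 4
    have b10 := hsb 1 3 4
    rw [abs_le, hk0_def]
    constructor <;> linarith [b1.1, b1.2, b2.1, b2.2, b3.1, b3.2, b4.1, b4.2, b5.1, b5.2,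
      b6.1, b6.2, b7.1, b7.2, b8.1, b8.2, b9.1, b9.2, b10.1, b10.2]
  refine ⟨⟨k0, hk0, hTheta'⟩, ?_⟩
  rw [hTheta']
  have hcast : |(k0 : ℝ)| ≤ 20 := by
    rw [← Int.cast_abs]
    exact_mod_cast hk0
  rw [abs_div]
  rw [show |(30 : ℝ)| = 30 by norm_num]
  rw [div_le_iff₀ (by norm_num : (0:ℝ) < 30)]
  linarith
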